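/- arXiv:1501.04174 — 16 statements merged into one kernel-verified Lean document; each statement's English description precedes it below -/
import Mathlib

section
/- Let (X, γ) be a closure system whose lattice of closed sets Cld(X, γ) is strongly coatomic. If (X, γ) satisfies the anti-exchange property, then whenever A ⋖ B (A is covered by B) in Cld(X, γ), the set B \ A contains exactly one element. -/
variable {X : Type*}

/-- `B` covers `A` in the lattice of closed sets of the closure system `(X, γ)`. -/
def CldCovBy (γ : ClosureOperator (Set X)) (A B : Set X) : Prop :=
  γ.IsClosed A ∧ γ.IsClosed B ∧ A ⊂ B ∧ ∀ C : Set X, γ.IsClosed C → A ⊂ C → ¬ C ⊂ B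

/-- The lattice of closed sets of `(X, γ)` is strongly coatomic. -/
def CldStronglyCoatomic (γ : ClosureOperator (Set X)) : Prop :=
  ∀ A C : Set X, γ.IsClosed A → γ.IsClosed C → A ⊂ C →
    ∃ B : Set X, γ.IsClosed B ∧ A ⊆ B ∧ CldCovBy γ B C

/-- The anti-exchange property for a closure system. -/
def AntiExchange (γ : ClosureOperator (Set X)) : Prop :=
  ∀ A : Set X, γ.IsClosed A → ∀ x y : X, x ≠ y → x ∉ A →
    x ∈ γ (A ∪ {y}) → y ∉ γ (A ∪ {x})

theorem aep_implies_covers_singleton (γ : ClosureOperator (Set X))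
    (hSC : CldStronglyCoatomic γ) (hAEP : AntiExchange γ) :
    ∀ A B : Set X, CldCovBy γ A B → ∃ b : X, B \ A = {b} := by
  intro A B ⟨hA, hB, hAB, hcov⟩
  -- For any z ∈ B \ A, γ(A ∪ {z}) = B.
  have key : ∀ z : X, z ∈ B \ A → γ (A ∪ {z}) = B := by
    intro z ⟨hzB, hzA⟩
    have hsub : γ (A ∪ {z}) ⊆ B := by
      have : γ (A ∪ {z}) ⊆ γ B := γ.monotone (by
        apply Set.union_subset hAB.1 (by simpa using hzB))
      rwa [hB.closure_eq] at this
    have hAsub : A ⊂ γ (A ∪ {z}) := by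
      constructor
      · exact (Set.subset_union_left).trans (γ.le_closure _)
      · intro h
        exact hzA (h ((γ.le_closure _) (Set.mem_union_right _ rfl)))
    by_contra hne
    exact hcov _ (γ.isClosed_closure _) hAsub ⟨hsub, fun h => hne (le_antisymm hsub h)⟩
  obtain ⟨x, hx⟩ : (B \ A).Nonempty := by
    obtain ⟨x, hxB, hxA⟩ := Set.exists_of_ssubset hAB
    exact ⟨x, hxB, hxA⟩
  refine ⟨x, Set.eq_singleton_iff_unique_mem.mpr ⟨hx, ?_⟩⟩
  intro y hy
  by_contra hne
  have hxcl : x ∈ γ (A ∪ {y}) := by rw [key y hy]; exact hx.1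
  have hycl : y ∈ γ (A ∪ {x}) := by rw [key x hx]; exact hy.1
  exact hAEP A hA x y (Ne.symm hne) hx.2 hxcl hycl
end

section
/- Let (X, γ) be a closure system whose lattice of closed sets Cld(X, γ) is strongly coatomic. If whenever A ⋖ B in Cld(X, γ) the set B \ A contains exactly one element, then (X, γ) satisfies the anti-exchange property. -/
variable {X : Type*}

theorem covers_singleton_implies_aep (γ : ClosureOperator (Set X))
    (hSC : CldStronglyCoatomic γ)
    (hcov : ∀ A B : Set X, CldCovBy γ A B → ∃ b : X, B \ A = {b}) :
    AntiExchange γ := by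
  intro A hA x y hxy hxA hx hy
  set C := γ (A ∪ {x}) with hC
  have hsubx : A ∪ {x} ⊆ C := γ.le_closure _
  have hAC : A ⊆ C := (Set.subset_union_left).trans hsubx
  have hxC : x ∈ C := hsubx (Set.mem_union_right _ rfl)
  -- γ (A ∪ {y}) ≤ C
  have h1 : γ (A ∪ {y}) ≤ C := by
    have : A ∪ {y} ≤ C := Set.union_subset hAC (by simpa using hy)
    simpa using γ.closure_min this (γ.isClosed_closure _)
  -- C ≤ γ (A ∪ {y})
  have h2 : C ≤ γ (A ∪ {y}) := by
    have h : A ∪ {x} ≤ γ (A ∪ {y}) :=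
      Set.union_subset ((Set.subset_union_left).trans (γ.le_closure _))
        (Set.singleton_subset_iff.mpr hx)
    exact γ.closure_min h (γ.isClosed_closure _)
  have hCeq : γ (A ∪ {y}) = C := le_antisymm h1 h2
  have hyC : y ∈ C := hCeq ▸ (γ.le_closure (A ∪ {y})) (Set.mem_union_right _ rfl)
  have hAsC : A ⊂ C := ⟨hAC, fun h => hxA (h hxC)⟩
  obtain ⟨B, hB, hAB, hBC⟩ := hSC A C hA (γ.isClosed_closure _) hAsC
  obtain ⟨b, hb⟩ := hcov B C hBC
  have hBsC : B ⊂ C := hBC.2.2.1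
  have hxB : x ∉ B := by
    intro hxB
    exact hBsC.2 (γ.closure_min
      (Set.union_subset hAB (Set.singleton_subset_iff.mpr hxB)) hB)
  have hyB : y ∉ B := by
    intro hyB
    have : C ≤ B := by
      have := γ.closure_min (Set.union_subset hAB (Set.singleton_subset_iff.mpr hyB)) hB
      calc C = γ (A ∪ {y}) := hCeq.symm
        _ ≤ B := this
    exact hBsC.2 this
  have hxb : x = b := by
    have : x ∈ C \ B := ⟨hxC, hxB⟩
    rw [hb] at this; exact this
  have hyb : y = b := by
    have : y ∈ C \ B := ⟨hyC, hyB⟩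
    rw [hb] at this; exact this
  exact hxy (hxb.trans hyb.symm)
end

section
/- Let (X, γ) be a closure system such that the lattice of closed sets Cld(X, γ) is strongly coatomic and satisfies: A ⋖ B implies |B \ A| = 1. Then for every x ∈ X with x ∉ γ(∅), the set γ({x}) \ {x} is closed and is the unique lower cover of γ({x}) in Cld(X, γ); in particular γ({x}) is a completely join irreducible element of Cld(X, γ). -/
variable {X : Type*}

theorem closure_singleton_completelyJoinIrreducible (γ : ClosureOperator (Set X))
    (hSC : CldStronglyCoatomic γ)
    (hcov : ∀ A B : Set X, CldCovBy γ A B → ∃ b : X, B \ A = {b})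
    (x : X) (hx : x ∉ γ ∅) :
    γ.IsClosed (γ {x} \ {x}) ∧ CldCovBy γ (γ {x} \ {x}) (γ {x}) ∧
      ∀ C : Set X, γ.IsClosed C → C ⊂ γ {x} → C ⊆ γ {x} \ {x} := by
  have hx1 : x ∈ γ {x} := γ.le_closure {x} rfl
  -- any closed proper subset of γ {x} avoids x
  have key : ∀ C : Set X, γ.IsClosed C → C ⊂ γ {x} → x ∉ C := by
    intro C hC hCsub hxC
    have : γ {x} ⊆ C := by
      have h1 : ({x} : Set X) ⊆ C := Set.singleton_subset_iff.mpr hxC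
      calc γ {x} ⊆ γ C := γ.monotone h1
        _ = C := hC.closure_eq
    exact hCsub.2 this
  have hsub : γ ∅ ⊂ γ {x} := by
    refine ⟨γ.monotone (Set.empty_subset _), fun h => hx (h hx1)⟩
  obtain ⟨B, hB, hBsub, hcovB⟩ := hSC (γ ∅) (γ {x}) (γ.isClosed_closure ∅)
    (γ.isClosed_closure {x}) hsub
  obtain ⟨b, hb⟩ := hcov B (γ {x}) hcovB
  have hxB : x ∉ B := key B hB hcovB.2.2.1
  have hbx : b = x := by
    have : x ∈ γ {x} \ B := ⟨hx1, hxB⟩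
    rw [hb] at this
    exact this.symm
  rw [hbx] at hb
  have hBeq : B = γ {x} \ {x} := by
    have hBs : B ⊆ γ {x} := hcovB.2.2.1.1
    ext y
    constructor
    · intro hy
      refine ⟨hBs hy, fun h => ?_⟩
      rw [Set.mem_singleton_iff] at h; subst h; exact hxB hy
    · intro ⟨hy1, hy2⟩
      by_contra hyB
      have : y ∈ γ {x} \ B := ⟨hy1, hyB⟩
      rw [hb] at this
      exact hy2 this
  rw [hBeq] at hB hcovB
  refine ⟨hB, hcovB, fun C hC hCsub y hyC => ?_⟩
  exact ⟨hCsub.1 hyC, fun h => key C hC hCsub (by rwa [Set.mem_singleton_iff.mp h] at hyC)⟩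
end

section
/- Let L be a strongly coatomic, strongly spatial complete lattice satisfying the join semidistributive law SD∨. Then for every covering pair c ⋖ w in L there exists a completely join irreducible element k which is the unique minimal element of the set {x : x ≤ w and x ≰ c}. -/
/-- An element of a complete lattice is completely join irreducible if it has a
unique lower cover, i.e. a lower cover above every element strictly below it. -/
def CompletelyJoinIrreducible {L : Type*} [CompleteLattice L] (j : L) : Prop :=
  ∃ jstar : L, jstar ⋖ j ∧ ∀ x : L, x < j → x ≤ jstar

theorem unique_minimal_of_sd_join {L : Type*} [CompleteLattice L]
    (hSC : ∀ a c : L, a < c → ∃ b : L, a ≤ b ∧ b ⋖ c)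
    (hSS : ∀ a b : L, ¬ a ≤ b → ∃ p : L, Minimal (fun x : L => x ≤ a ∧ ¬ x ≤ b) p)
    (hSD : ∀ x y z : L, x ⊔ y = x ⊔ z → x ⊔ y = x ⊔ (y ⊓ z)) :
    ∀ c w : L, c ⋖ w → ∃ k : L, CompletelyJoinIrreducible k ∧
      Minimal (fun x : L => x ≤ w ∧ ¬ x ≤ c) k ∧
      ∀ k' : L, Minimal (fun x : L => x ≤ w ∧ ¬ x ≤ c) k' → k' = k := by
  intro c w hcw
  obtain ⟨k, hk⟩ := hSS w c hcw.lt.not_ge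
  obtain ⟨⟨hkw, hkc⟩, hkmin⟩ := hk
  -- every element strictly below k is ≤ c
  have hbelow : ∀ x : L, x < k → x ≤ c := by
    intro x hx
    by_contra hxc
    exact hx.not_ge (hkmin ⟨hx.le.trans hkw, hxc⟩ hx.le)
  -- join with c gives w
  have hjoin : ∀ x : L, x ≤ w → ¬ x ≤ c → c ⊔ x = w := by
    intro x hxw hxc
    have h1 : c ⊔ x ≤ w := sup_le hcw.lt.le hxw
    have h2 : c < c ⊔ x := lt_of_le_of_ne le_sup_left (by
      intro h; exact hxc (le_sup_right.trans h.symm.le))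
    rcases lt_or_eq_of_le h1 with h | h
    · exact absurd h (hcw.2 h2)
    · exact h
  refine ⟨k, ⟨k ⊓ c, ?_, fun x hx => le_inf hx.le (hbelow x hx)⟩,
    ⟨⟨hkw, hkc⟩, hkmin⟩, ?_⟩
  · constructor
    · exact lt_of_le_of_ne inf_le_left (fun h => hkc (h.symm.le.trans inf_le_right))
    · intro y h1 h2
      exact h1.not_ge (le_inf h2.le (hbelow y h2))
  · intro k' ⟨⟨hk'w, hk'c⟩, hk'min⟩
    have e1 : c ⊔ k = w := hjoin k hkw hkc
    have e2 : c ⊔ k' = w := hjoin k' hk'w hk'c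
    have e3 : c ⊔ k = c ⊔ (k ⊓ k') := hSD c k k' (e1.trans e2.symm)
    have hmc : ¬ k ⊓ k' ≤ c := by
      intro h
      have : c ⊔ (k ⊓ k') = c := sup_eq_left.mpr h
      exact hcw.lt.ne ((e1.symm.trans e3).trans this).symm
    have h1 : k ≤ k ⊓ k' := hkmin ⟨inf_le_left.trans hkw, hmc⟩ inf_le_left
    have h2 : k' ≤ k ⊓ k' := hk'min ⟨inf_le_left.trans hkw, hmc⟩ inf_le_right
    exact le_antisymm (h2.trans inf_le_left) (h1.trans inf_le_right)
end

section
/- Let L be a strongly coatomic, strongly spatial complete lattice in which for every covering pair c ⋖ w there exists a unique minimal element k_c of the set {x : x ≤ w and x ≰ c}. Then every element w ∈ L has a canonical join decomposition: w = ⋁_{c ⋖ w} k_c, this join is irredundant (removing any k_c strictly lowers the join), and for every set B with ⋁B = w the family {k_c : c ⋖ w} refines B (each k_c lies below some element of B). -/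
theorem canonical_join_decomposition_of_unique_minimal
    {L : Type*} [CompleteLattice L]
    (hSC : ∀ a c : L, a < c → ∃ b : L, a ≤ b ∧ b ⋖ c)
    (hSS : ∀ a b : L, ¬ a ≤ b → ∃ p : L, Minimal (fun x : L => x ≤ a ∧ ¬ x ≤ b) p)
    (hUM : ∀ c w : L, c ⋖ w → ∃! k : L, Minimal (fun x : L => x ≤ w ∧ ¬ x ≤ c) k) :
    ∀ w : L,
      sSup {k : L | ∃ c : L, c ⋖ w ∧ Minimal (fun x : L => x ≤ w ∧ ¬ x ≤ c) k} = w ∧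
      (∀ k ∈ {k : L | ∃ c : L, c ⋖ w ∧ Minimal (fun x : L => x ≤ w ∧ ¬ x ≤ c) k},
        sSup ({k : L | ∃ c : L, c ⋖ w ∧ Minimal (fun x : L => x ≤ w ∧ ¬ x ≤ c) k} \ {k}) < w) ∧
      (∀ B : Set L, sSup B = w →
        ∀ k ∈ {k : L | ∃ c : L, c ⋖ w ∧ Minimal (fun x : L => x ≤ w ∧ ¬ x ≤ c) k},
          ∃ b ∈ B, k ≤ b) := by
  intro w
  set S := {k : L | ∃ c : L, c ⋖ w ∧ Minimal (fun x : L => x ≤ w ∧ ¬ x ≤ c) k} with hSdef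
  -- Key lemma: the unique minimal element of {x ≤ w, x ≰ c} is below every x ≤ w with x ≰ c.
  have key : ∀ c k : L, c ⋖ w → Minimal (fun x : L => x ≤ w ∧ ¬ x ≤ c) k →
      ∀ x : L, x ≤ w → ¬ x ≤ c → k ≤ x := by
    intro c k hc hk x hxw hxc
    obtain ⟨p, hp⟩ := hSS x c hxc
    have hpmin : Minimal (fun y : L => y ≤ w ∧ ¬ y ≤ c) p := by
      refine ⟨⟨hp.1.1.trans hxw, hp.1.2⟩, ?_⟩
      intro y hy hyp
      exact hp.2 ⟨hyp.trans hp.1.1, hy.2⟩ hyp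
    obtain ⟨k', _, huniq⟩ := hUM c w hc
    have hpk : k = p := (huniq k hk).trans (huniq p hpmin).symm
    exact hpk ▸ hp.1.1
  have hmemle : ∀ k ∈ S, k ≤ w := by
    rintro k ⟨c, hc, hk⟩
    exact hk.1.1
  have hSle : sSup S ≤ w := sSup_le hmemle
  -- Part 1: the join of S is w.
  have h1 : sSup S = w := by
    by_contra hne
    have hlt : sSup S < w := lt_of_le_of_ne hSle hne
    obtain ⟨b, hle, hb⟩ := hSC _ _ hlt
    obtain ⟨k, hk, _⟩ := hUM b w hb
    exact hk.1.2 ((le_sSup (show k ∈ S from ⟨b, hb, hk⟩)).trans hle)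
  -- Part 3: refinement.
  have h3 : ∀ B : Set L, sSup B = w → ∀ k ∈ S, ∃ b ∈ B, k ≤ b := by
    rintro B hB k ⟨c, hc, hk⟩
    by_contra h
    push_neg at h
    have hall : ∀ b ∈ B, b ≤ c := by
      intro b hb
      by_contra hbc
      exact h b hb (key c k hc hk b ((le_sSup hb).trans hB.le) hbc)
    have : w ≤ c := hB ▸ sSup_le hall
    exact absurd this hc.lt.not_ge
  -- Part 2: irredundance.
  refine ⟨h1, ?_, h3⟩
  rintro k hkS
  obtain ⟨c, hc, hkmin⟩ := hkS
  have hle : sSup (S \ {k}) ≤ w := sSup_le fun j hj => hmemle j hj.1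
  refine lt_of_le_of_ne hle ?_
  intro heq
  obtain ⟨j, hjmem, hkj⟩ := h3 _ heq k ⟨c, hc, hkmin⟩
  obtain ⟨⟨c', hc', hjmin⟩, hjne⟩ := hjmem
  have hjc : ¬ j ≤ c := fun h => hkmin.1.2 (hkj.trans h)
  have hcc' : c ≤ c' := by
    by_contra h
    exact hjc (key c' j hc' hjmin c hc.le h)
  have hceq : c = c' := by
    by_contra hne
    exact hc.2 (hcc'.lt_of_ne hne) hc'.lt
  obtain ⟨k0, _, huniq⟩ := hUM c w hc
  have : j = k := (huniq j (hceq ▸ hjmin)).trans (huniq k hkmin).symm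
  exact hjne this
end

section
/- Let L be a complete lattice in which every element has a canonical join decomposition. Then L satisfies the general join semidistributive law SD∨*: if w = ⋁S = ⋁T for subsets S, T ⊆ L, then w = ⋁{s ⊓ t : s ∈ S, t ∈ T}. -/
theorem sd_join_star_of_canonical_join_decompositions
    {L : Type*} [CompleteLattice L]
    (hCJD : ∀ w : L, ∃ A : Set L, sSup A = w ∧
      (∀ a ∈ A, sSup (A \ {a}) < w) ∧
      (∀ B : Set L, sSup B = w → ∀ a ∈ A, ∃ b ∈ B, a ≤ b)) :
    ∀ (w : L) (S T : Set L), sSup S = w → sSup T = w →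
      w = sSup {m : L | ∃ s ∈ S, ∃ t ∈ T, m = s ⊓ t} := by
  intro w S T hS hT
  obtain ⟨A, hA, _, href⟩ := hCJD w
  apply le_antisymm
  · rw [← hA]
    apply sSup_le
    intro a ha
    obtain ⟨s, hs, has⟩ := href S hS a ha
    obtain ⟨t, ht, hat⟩ := href T hT a ha
    exact le_trans (le_inf has hat) (le_sSup ⟨s, hs, t, ht, rfl⟩)
  · apply sSup_le
    rintro m ⟨s, hs, t, ht, rfl⟩
    exact le_trans inf_le_left (hS ▸ le_sSup hs)
end

section
/- Let L be a strongly coatomic, strongly spatial complete lattice satisfying the join semidistributive law SD∨. Then L satisfies the general join semidistributive law SD∨*: if w = ⋁S = ⋁T for subsets S, T ⊆ L, then w = ⋁{s ⊓ t : s ∈ S, t ∈ T}. -/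
theorem sd_join_star_of_sd_join {L : Type*} [CompleteLattice L]
    (hSC : ∀ a c : L, a < c → ∃ b : L, a ≤ b ∧ b ⋖ c)
    (hSS : ∀ a b : L, ¬ a ≤ b → ∃ p : L, Minimal (fun x : L => x ≤ a ∧ ¬ x ≤ b) p)
    (hSD : ∀ x y z : L, x ⊔ y = x ⊔ z → x ⊔ y = x ⊔ (y ⊓ z)) :
    ∀ (w : L) (S T : Set L), sSup S = w → sSup T = w →
      w = sSup {m : L | ∃ s ∈ S, ∃ t ∈ T, m = s ⊓ t} := by
  intro w S T hS hT
  set u := sSup {m : L | ∃ s ∈ S, ∃ t ∈ T, m = s ⊓ t} with hu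
  have hule : u ≤ w := by
    apply sSup_le
    rintro m ⟨s, hs, t, ht, rfl⟩
    exact le_trans inf_le_left (hS ▸ le_sSup hs)
  rcases lt_or_eq_of_le hule with hlt | heq
  · exfalso
    obtain ⟨b, hub, hbw⟩ := hSC u w hlt
    obtain ⟨s, hs, hsb⟩ : ∃ s ∈ S, ¬ s ≤ b := by
      by_contra h
      push_neg at h
      exact absurd (hS ▸ sSup_le h) (not_le_of_gt hbw.lt)
    obtain ⟨t, ht, htb⟩ : ∃ t ∈ T, ¬ t ≤ b := by
      by_contra h
      push_neg at h
      exact absurd (hT ▸ sSup_le h) (not_le_of_gt hbw.lt)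
    have hsle : s ≤ w := hS ▸ le_sSup hs
    have htle : t ≤ w := hT ▸ le_sSup ht
    have hbs : b ⊔ s = w := by
      rcases hbw.eq_or_eq le_sup_left (sup_le hbw.le hsle) with h | h
      · exact absurd (h ▸ le_sup_right : s ≤ b) hsb
      · exact h
    have hbt : b ⊔ t = w := by
      rcases hbw.eq_or_eq le_sup_left (sup_le hbw.le htle) with h | h
      · exact absurd (h ▸ le_sup_right : t ≤ b) htb
      · exact h
    have hsd := hSD b s t (hbs.trans hbt.symm)
    have hst : s ⊓ t ≤ b := le_trans (le_sSup (show s ⊓ t ∈ {m : L | ∃ s ∈ S, ∃ t ∈ T, m = s ⊓ t} from ⟨s, hs, t, ht, rfl⟩)) hub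
    have : w = b := by
      rw [← hbs, hsd, sup_eq_left.mpr hst]
    exact absurd this (ne_of_gt hbw.lt)
  · exact heq.symm
end

section
/- Let (X, γ) be a closure system whose lattice of closed sets Cld(X, γ) is strongly coatomic and satisfies: A ⋖ B implies |B \ A| = 1. Then every closed set B has a canonical join decomposition in Cld(X, γ): writing {x_A} = B \ A for each lower cover A ⋖ B, one has B = ⋁_{A ⋖ B} γ({x_A}) in Cld(X, γ), this join is irredundant, and the family {γ({x_A}) : A ⋖ B} refines every family of closed sets whose join is B. In particular Cld(X, γ) is join semidistributive. -/
variable {X : Type*}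

/-- The family `{γ({x_A}) : A ⋖ B}`, where `{x_A} = B \ A` for each lower cover `A` of `B`
in the lattice of closed sets. -/
def CoverGens (γ : ClosureOperator (Set X)) (B : Set X) : Set (Set X) :=
  {K : Set X | ∃ (A : Set X) (x : X), CldCovBy γ A B ∧ B \ A = {x} ∧ K = γ {x}}

open Set

private lemma gen_subset (γ : ClosureOperator (Set X)) {B : Set X} (hB : γ.IsClosed B)
    {K : Set X} (hK : K ∈ CoverGens γ B) : K ⊆ B := by
  obtain ⟨A, x, hA, hx, rfl⟩ := hK
  have hxB : x ∈ B \ A := by rw [hx]; exact mem_singleton x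
  calc γ {x} ⊆ γ B := γ.monotone (singleton_subset_iff.2 hxB.1)
    _ = B := hB.closure_eq

private lemma refine_lem (γ : ClosureOperator (Set X)) {B : Set X}
    (D : Set (Set X)) (hD : ∀ E ∈ D, γ.IsClosed E) (hjoin : γ (⋃₀ D) = B)
    {K : Set X} (hK : K ∈ CoverGens γ B) : ∃ E ∈ D, K ⊆ E := by
  obtain ⟨A, x, hA, hx, rfl⟩ := hK
  by_cases h : ∃ E ∈ D, x ∈ E
  · obtain ⟨E, hE, hxE⟩ := h
    refine ⟨E, hE, ?_⟩
    calc γ {x} ⊆ γ E := γ.monotone (singleton_subset_iff.2 hxE)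
      _ = E := (hD E hE).closure_eq
  · exfalso
    push_neg at h
    have hAeq : A = B \ {x} := by rw [← hx, diff_diff_cancel_left hA.2.2.1.1]
    have hsub : ⋃₀ D ⊆ A := by
      rintro y ⟨E, hE, hyE⟩
      have hEB : E ⊆ B := by
        calc E ⊆ ⋃₀ D := subset_sUnion_of_mem hE
          _ ⊆ γ (⋃₀ D) := γ.le_closure _
          _ = B := hjoin
      rw [hAeq]
      exact ⟨hEB hyE, fun heq => h E hE (by rwa [mem_singleton_iff.1 heq] at hyE)⟩
    have hBA : B ⊆ A := by
      calc B = γ (⋃₀ D) := hjoin.symm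
        _ ⊆ γ A := γ.monotone hsub
        _ = A := hA.1.closure_eq
    exact hA.2.2.1.not_subset hBA

private lemma join_eq (γ : ClosureOperator (Set X)) (hSC : CldStronglyCoatomic γ)
    (hcov : ∀ A B : Set X, CldCovBy γ A B → ∃ b : X, B \ A = {b})
    {B : Set X} (hB : γ.IsClosed B) : γ (⋃₀ CoverGens γ B) = B := by
  have hsub : γ (⋃₀ CoverGens γ B) ⊆ B := by
    have h1 : ⋃₀ CoverGens γ B ⊆ B := sUnion_subset fun K hK => gen_subset γ hB hK
    calc γ (⋃₀ CoverGens γ B) ⊆ γ B := γ.monotone h1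
      _ = B := hB.closure_eq
  by_contra hne
  have hss : γ (⋃₀ CoverGens γ B) ⊂ B := ssubset_of_subset_of_ne hsub hne
  obtain ⟨A, hAc, hJA, hcovAB⟩ := hSC _ B (γ.isClosed_closure _) hB hss
  obtain ⟨x, hx⟩ := hcov A B hcovAB
  have hxmem : x ∈ B \ A := by rw [hx]; exact mem_singleton x
  have hKmem : γ {x} ∈ CoverGens γ B := ⟨A, x, hcovAB, hx, rfl⟩
  have hxA : x ∈ A := by
    have h1 : x ∈ γ {x} := γ.le_closure {x} (mem_singleton x)
    have h2 : γ {x} ⊆ ⋃₀ CoverGens γ B := subset_sUnion_of_mem hKmem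
    exact hJA (γ.le_closure _ (h2 h1))
  exact hxmem.2 hxA

private lemma irr_lem (γ : ClosureOperator (Set X)) {B : Set X}
    {K : Set X} (hK : K ∈ CoverGens γ B) : γ (⋃₀ (CoverGens γ B \ {K})) ⊂ B := by
  obtain ⟨A, x, hA, hx, hKeq⟩ := hK
  have hAB : A ⊂ B := hA.2.2.1
  have hAeq : A = B \ {x} := by rw [← hx, diff_diff_cancel_left hAB.1]
  have hsub : ⋃₀ (CoverGens γ B \ {K}) ⊆ A := by
    rintro y ⟨K', ⟨⟨A', x', hA', hx', rfl⟩, hne⟩, hyK'⟩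
    have hxx' : x' ≠ x := by
      rintro rfl
      exact hne (by rw [hKeq]; exact mem_singleton _)
    have hx'B : x' ∈ B \ A' := by rw [hx']; exact mem_singleton x'
    have hx'A : x' ∈ A := by
      rw [hAeq]
      exact ⟨hx'B.1, fun heq => hxx' (mem_singleton_iff.1 heq)⟩
    have hKA : γ {x'} ⊆ A := by
      calc γ {x'} ⊆ γ A := γ.monotone (singleton_subset_iff.2 hx'A)
        _ = A := hA.1.closure_eq
    exact hKA hyK'
  refine ssubset_of_subset_of_ssubset ?_ hAB
  calc γ (⋃₀ (CoverGens γ B \ {K})) ⊆ γ A := γ.monotone hsub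
    _ = A := hA.1.closure_eq

theorem closed_sets_canonical_join_decomposition (γ : ClosureOperator (Set X))
    (hSC : CldStronglyCoatomic γ)
    (hcov : ∀ A B : Set X, CldCovBy γ A B → ∃ b : X, B \ A = {b}) :
    (∀ B : Set X, γ.IsClosed B →
      γ (⋃₀ CoverGens γ B) = B ∧
      (∀ K ∈ CoverGens γ B, γ (⋃₀ (CoverGens γ B \ {K})) ⊂ B) ∧
      (∀ D : Set (Set X), (∀ E ∈ D, γ.IsClosed E) → γ (⋃₀ D) = B →
        ∀ K ∈ CoverGens γ B, ∃ E ∈ D, K ⊆ E)) ∧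
    (∀ x y z : Set X, γ.IsClosed x → γ.IsClosed y → γ.IsClosed z →
      γ (x ∪ y) = γ (x ∪ z) → γ (x ∪ y) = γ (x ∪ (y ∩ z))) := by
  constructor
  · intro B hB
    exact ⟨join_eq γ hSC hcov hB, fun K hK => irr_lem γ hK,
      fun D hD hjoin K hK => refine_lem γ D hD hjoin hK⟩
  · intro x y z hx hy hz hxy
    have hB : γ.IsClosed (γ (x ∪ y)) := γ.isClosed_closure _
    have h1 : γ (⋃₀ ({x, y} : Set (Set X))) = γ (x ∪ y) := by rw [sUnion_pair]
    have h2 : γ (⋃₀ ({x, z} : Set (Set X))) = γ (x ∪ y) := by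
      rw [sUnion_pair]; exact hxy.symm
    have hD1 : ∀ E ∈ ({x, y} : Set (Set X)), γ.IsClosed E := by
      rintro E hE
      rcases mem_insert_iff.1 hE with rfl | hE
      · exact hx
      · rw [mem_singleton_iff.1 hE]; exact hy
    have hD2 : ∀ E ∈ ({x, z} : Set (Set X)), γ.IsClosed E := by
      rintro E hE
      rcases mem_insert_iff.1 hE with rfl | hE
      · exact hx
      · rw [mem_singleton_iff.1 hE]; exact hz
    have hsubs : ⋃₀ CoverGens γ (γ (x ∪ y)) ⊆ x ∪ (y ∩ z) := by
      rintro a ⟨K, hK, haK⟩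
      obtain ⟨E1, hE1, hKE1⟩ := refine_lem γ {x, y} hD1 h1 hK
      obtain ⟨E2, hE2, hKE2⟩ := refine_lem γ {x, z} hD2 h2 hK
      rcases mem_insert_iff.1 hE1 with rfl | hE1
      · exact Or.inl (hKE1 haK)
      · rcases mem_insert_iff.1 hE2 with rfl | hE2
        · exact Or.inl (hKE2 haK)
        · rw [mem_singleton_iff.1 hE1] at hKE1
          rw [mem_singleton_iff.1 hE2] at hKE2
          exact Or.inr ⟨hKE1 haK, hKE2 haK⟩
    have le1 : γ (x ∪ y) ⊆ γ (x ∪ (y ∩ z)) := by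
      calc γ (x ∪ y) = γ (⋃₀ CoverGens γ (γ (x ∪ y))) := (join_eq γ hSC hcov hB).symm
        _ ⊆ γ (x ∪ (y ∩ z)) := γ.monotone hsubs
    have le2 : γ (x ∪ (y ∩ z)) ⊆ γ (x ∪ y) := by
      have h : x ∪ (y ∩ z) ⊆ γ (x ∪ y) :=
        (union_subset_union_right x inter_subset_left).trans (γ.le_closure _)
      calc γ (x ∪ (y ∩ z)) ⊆ γ (γ (x ∪ y)) := γ.monotone h
        _ = γ (x ∪ y) := γ.idempotent _
    exact Subset.antisymm le1 le2
end

section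
/- Let (X, γ) be a closure system satisfying: A ⋖ B in Cld(X, γ) implies |B \ A| = 1. Then the lattice Cld(X, γ) is lower semimodular. -/
variable {X : Type*}

theorem lower_semimodular_of_covers_singleton (γ : ClosureOperator (Set X))
    (hcov : ∀ A B : Set X, CldCovBy γ A B → ∃ b : X, B \ A = {b}) :
    ∀ A C : Set X, γ.IsClosed A → γ.IsClosed C →
      CldCovBy γ A (γ (A ∪ C)) → CldCovBy γ (A ∩ C) C := by
  intro A C hA hC hcb
  have hAB := hcb.2.2.1
  obtain ⟨b, hb⟩ := hcov A _ hcb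
  have hCB : C ⊆ γ (A ∪ C) := Set.subset_union_right.trans (γ.le_closure _)
  -- C is not contained in A
  have hCA : ¬ C ⊆ A := by
    intro h
    have : A ∪ C = A := Set.union_eq_self_of_subset_right h
    rw [this, hA.closure_eq] at hAB
    exact hAB.ne rfl
  obtain ⟨c0, hc0C, hc0A⟩ := Set.not_subset.mp hCA
  have hc0b : c0 = b := by
    have : c0 ∈ γ (A ∪ C) \ A := ⟨hCB hc0C, hc0A⟩
    rwa [hb, Set.mem_singleton_iff] at this
  have hbC : b ∈ C := hc0b ▸ hc0C
  have hbA : b ∉ A := hc0b ▸ hc0A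
  have hACclosed : γ.IsClosed (A ∩ C) := by
    rw [γ.isClosed_iff]
    refine subset_antisymm (Set.subset_inter ?_ ?_) (γ.le_closure _)
    · exact (γ.monotone Set.inter_subset_left).trans hA.closure_eq.le
    · exact (γ.monotone Set.inter_subset_right).trans hC.closure_eq.le
  refine ⟨hACclosed, hC, (Set.ssubset_iff_of_subset Set.inter_subset_right).2 ⟨b, hbC, fun h => hbA h.1⟩, ?_⟩
  intro D hD hACD hDC
  obtain ⟨x, hxD, hxAC⟩ := Set.exists_of_ssubset hACD
  have hxC : x ∈ C := hDC.subset hxD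
  have hxA : x ∉ A := fun h => hxAC ⟨h, hxC⟩
  have hxb : x = b := by
    have : x ∈ γ (A ∪ C) \ A := ⟨hCB hxC, hxA⟩
    rwa [hb, Set.mem_singleton_iff] at this
  have hbD : b ∈ D := hxb ▸ hxD
  have : C ⊆ D := by
    intro c hc
    by_cases hcA : c ∈ A
    · exact hACD.subset ⟨hcA, hc⟩
    · have : c = b := by
        have : c ∈ γ (A ∪ C) \ A := ⟨hCB hc, hcA⟩
        rwa [hb, Set.mem_singleton_iff] at this
      exact this ▸ hbD
  exact hDC.not_subset this
end

section
/- Let L be a strongly coatomic, spatial complete lattice that is join semidistributive and lower semimodular. Then for every covering pair c ⋖ w in L there exists a unique completely join irreducible element j with j ≤ w and j ≰ c. -/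
theorem unique_cji_of_jsd_lsm {L : Type*} [CompleteLattice L]
    (hSC : ∀ a c : L, a < c → ∃ b : L, a ≤ b ∧ b ⋖ c)
    (hSpatial : ∀ a : L, a = sSup {p : L | CompletelyJoinIrreducible p ∧ p ≤ a})
    (hSD : ∀ x y z : L, x ⊔ y = x ⊔ z → x ⊔ y = x ⊔ (y ⊓ z))
    (hLSM : ∀ a c : L, a ⋖ a ⊔ c → a ⊓ c ⋖ c) :
    ∀ c w : L, c ⋖ w →
      ∃! j : L, CompletelyJoinIrreducible j ∧ j ≤ w ∧ ¬ j ≤ c := by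
  intro c w hcw
  have hclt : c < w := hcw.lt
  -- existence
  obtain ⟨j, hj⟩ : ∃ j, CompletelyJoinIrreducible j ∧ j ≤ w ∧ ¬ j ≤ c := by
    by_contra h
    push_neg at h
    have hwc : w ≤ c := by
      conv_lhs => rw [hSpatial w]
      apply sSup_le
      rintro p ⟨hp, hpw⟩
      exact h p hp hpw
    exact hclt.not_ge hwc
  -- key: for any such j, c ⊔ j = w and every x < j satisfies x ≤ c
  have key : ∀ j : L, CompletelyJoinIrreducible j → j ≤ w → ¬ j ≤ c →
      c ⊔ j = w ∧ ∀ x, x < j → x ≤ c := by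
    intro j ⟨js, hjs, hjsmax⟩ hjw hjc
    have hjoin : c ⊔ j = w := by
      have h1 : c < c ⊔ j := lt_of_le_of_ne le_sup_left (by
        intro h; exact hjc (sup_eq_left.mp h.symm))
      have h2 : c ⊔ j ≤ w := sup_le hclt.le hjw
      exact h2.lt_or_eq.resolve_left (hcw.2 h1)
    refine ⟨hjoin, ?_⟩
    -- LSM gives c ⊓ j ⋖ j
    have hcovj : c ⊓ j ⋖ j := by
      apply hLSM
      rw [hjoin]
      exact ⟨hclt, fun x hx hxw => hcw.2 hx hxw⟩
    -- c ⊓ j < j, so c ⊓ j ≤ js < j; covering forces js = c ⊓ j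
    have hlt : c ⊓ j < j := hcovj.lt
    have hle : c ⊓ j ≤ js := hjsmax _ hlt
    have hjseq : js = c ⊓ j := by
      by_contra hne
      exact hcovj.2 (lt_of_le_of_ne hle (Ne.symm hne)) hjs.lt
    intro x hx
    calc x ≤ js := hjsmax x hx
    _ = c ⊓ j := hjseq
    _ ≤ c := inf_le_left
  refine ⟨j, hj, ?_⟩
  rintro y ⟨hycji, hyw, hyc⟩
  obtain ⟨hjoinj, hbelowj⟩ := key j hj.1 hj.2.1 hj.2.2
  obtain ⟨hjoiny, hbelowy⟩ := key y hycji hyw hyc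
  -- show y ≤ j and j ≤ y using SD
  have hle1 : ∀ a b : L, c ⊔ a = w → c ⊔ b = w → (∀ x, x < a → x ≤ c) → a ≤ b := by
    intro a b ha hb hbelow
    have hsd := hSD c a b (ha.trans hb.symm)
    by_contra hnle
    have hlt : a ⊓ b < a := inf_le_left.lt_of_ne (fun h => hnle (h ▸ inf_le_right))
    have : c ⊔ (a ⊓ b) = c := sup_eq_left.mpr (hbelow _ hlt)
    rw [this] at hsd
    exact absurd (ha ▸ hsd : w = c) (fun h => hclt.ne' h)
  exact le_antisymm (hle1 y j hjoiny hjoinj hbelowy) (hle1 j y hjoinj hjoiny hbelowj)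
end

section
/- Let L be a strongly coatomic, spatial complete lattice in which for every covering pair c ⋖ w there exists a unique completely join irreducible element j with j ≤ w and j ≰ c. Then every element w ∈ L is the join of its extreme points: w = ⋁ Ex(w), where Ex(w) is the set of completely join irreducible x ≤ w such that ⋁({p : p completely join irreducible, p ≤ w} \ {x}) < w. -/
/-- The set of completely join irreducible elements below `w`. -/
def Ji {L : Type*} [CompleteLattice L] (w : L) : Set L :=
  {p : L | CompletelyJoinIrreducible p ∧ p ≤ w}

/-- The set of extreme points of `w`. -/
def Ex {L : Type*} [CompleteLattice L] (w : L) : Set L :=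
  {x ∈ Ji w | sSup (Ji w \ {x}) < w}

theorem eq_sSup_extreme_points_of_unique_cji {L : Type*} [CompleteLattice L]
    (hSC : ∀ a c : L, a < c → ∃ b : L, a ≤ b ∧ b ⋖ c)
    (hSpatial : ∀ a : L, a = sSup {p : L | CompletelyJoinIrreducible p ∧ p ≤ a})
    (hUJ : ∀ c w : L, c ⋖ w →
      ∃! j : L, CompletelyJoinIrreducible j ∧ j ≤ w ∧ ¬ j ≤ c) :
    ∀ w : L, w = sSup (Ex w) := by
  intro w
  have hJi : sSup (Ji w) = w := (hSpatial w).symm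
  have hle : sSup (Ex w) ≤ w := by
    apply sSup_le
    rintro x ⟨⟨_, hxw⟩, -⟩
    exact hxw
  rcases eq_or_lt_of_le hle with h | h
  · exact h.symm
  · exfalso
    obtain ⟨b, hsb, hbw⟩ := hSC _ _ h
    obtain ⟨j, ⟨hjCJI, hjw, hjb⟩, huniq⟩ := hUJ b w hbw
    have hjEx : j ∈ Ex w := by
      refine ⟨⟨hjCJI, hjw⟩, ?_⟩
      have : sSup (Ji w \ {j}) ≤ b := by
        apply sSup_le
        rintro p ⟨⟨hpCJI, hpw⟩, hpj⟩
        by_contra hpb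
        exact hpj (huniq p ⟨hpCJI, hpw, hpb⟩)
      exact lt_of_le_of_lt this hbw.lt
    exact hjb (le_trans (le_sSup hjEx) hsb)
end

section
/- Let L be a strongly coatomic, spatial complete lattice in which every element w satisfies w = ⋁ Ex(w). Then every element w ∈ L has a unique irredundant join decomposition into completely join irreducible elements, namely w = ⋁ Ex(w), and this decomposition is canonical: Ex(w) refines every set B with ⋁B = w. -/
theorem unique_irredundant_decomposition_of_extreme_points
    {L : Type*} [CompleteLattice L]
    (hSC : ∀ a c : L, a < c → ∃ b : L, a ≤ b ∧ b ⋖ c)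
    (hSpatial : ∀ a : L, a = sSup {p : L | CompletelyJoinIrreducible p ∧ p ≤ a})
    (hEx : ∀ w : L, w = sSup (Ex w)) :
    ∀ w : L,
      (∀ x ∈ Ex w, CompletelyJoinIrreducible x) ∧
      sSup (Ex w) = w ∧
      (∀ x ∈ Ex w, sSup (Ex w \ {x}) < w) ∧
      (∀ B : Set L, (∀ b ∈ B, CompletelyJoinIrreducible b) → sSup B = w →
        (∀ b ∈ B, sSup (B \ {b}) < w) → B = Ex w) ∧
      (∀ B : Set L, sSup B = w → ∀ x ∈ Ex w, ∃ b ∈ B, x ≤ b) := by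
  intro w
  have hJi : ∀ a : L, a = sSup (Ji a) := hSpatial
  -- the refinement property
  have h5 : ∀ B : Set L, sSup B = w → ∀ x ∈ Ex w, ∃ b ∈ B, x ≤ b := by
    intro B hB x hx
    obtain ⟨⟨hxCJI, hxw⟩, hlt⟩ := hx
    by_contra h
    push_neg at h
    have key : ∀ b ∈ B, b ≤ sSup (Ji w \ {x}) := by
      intro b hb
      have hbw : b ≤ w := hB ▸ le_sSup hb
      calc b = sSup (Ji b) := hJi b
        _ ≤ sSup (Ji w \ {x}) := by
            apply sSup_le_sSup
            rintro p ⟨hpCJI, hpb⟩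
            exact ⟨⟨hpCJI, hpb.trans hbw⟩, fun hpx => h b hb (hpx ▸ hpb)⟩
    have hwle : w ≤ sSup (Ji w \ {x}) := hB.symm.trans_le (sSup_le key)
    exact absurd (lt_of_le_of_lt hwle hlt) (lt_irrefl w)
  refine ⟨fun x hx => hx.1.1, (hEx w).symm, ?_, ?_, h5⟩
  · intro x hx
    have hsub : Ex w \ {x} ⊆ Ji w \ {x} := fun p hp => ⟨hp.1.1, hp.2⟩
    exact lt_of_le_of_lt (sSup_le_sSup hsub) hx.2
  · intro B hBCJI hB hirr
    have hExB : Ex w ⊆ B := by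
      intro x hx
      obtain ⟨b, hbB, hxb⟩ := h5 B hB x hx
      by_cases hbx : b = x
      · exact hbx ▸ hbB
      · exfalso
        have hbJi : b ∈ Ji w \ {x} := ⟨⟨hBCJI b hbB, hB ▸ le_sSup hbB⟩, hbx⟩
        have hxle : x ≤ sSup (Ji w \ {x}) := hxb.trans (le_sSup hbJi)
        have hw : w ≤ sSup (Ji w \ {x}) := by
          conv_lhs => rw [hJi w]
          apply sSup_le
          intro p hp
          by_cases hpx : p = x
          · exact hpx ▸ hxle
          · exact le_sSup ⟨hp, hpx⟩
        exact absurd (lt_of_le_of_lt hw hx.2) (lt_irrefl w)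
    ext b
    constructor
    · intro hb
      by_contra hnb
      have hsub : Ex w ⊆ B \ {b} :=
        fun x hx => ⟨hExB hx, fun hxb => hnb (hxb ▸ hx)⟩
      have hw : w ≤ sSup (B \ {b}) := (hEx w).le.trans (sSup_le_sSup hsub)
      exact absurd (lt_of_le_of_lt hw (hirr b hb)) (lt_irrefl w)
    · exact fun hb => hExB hb
end

section
/- Let L be a strongly coatomic, spatial complete lattice in which every element has a unique irredundant join decomposition into completely join irreducible elements, and this decomposition is canonical (it refines every other join representation). Then for every covering pair c ⋖ w in L there exists a unique completely join irreducible element j with j ≤ w and j ≰ c. -/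
theorem unique_cji_of_unique_canonical_decomposition
    {L : Type*} [CompleteLattice L]
    (hSC : ∀ a c : L, a < c → ∃ b : L, a ≤ b ∧ b ⋖ c)
    (hSpatial : ∀ a : L, a = sSup {p : L | CompletelyJoinIrreducible p ∧ p ≤ a})
    (hUD : ∀ w : L, ∃ A : Set L,
      (∀ a ∈ A, CompletelyJoinIrreducible a) ∧
      sSup A = w ∧
      (∀ a ∈ A, sSup (A \ {a}) < w) ∧
      (∀ B : Set L, sSup B = w → ∀ a ∈ A, ∃ b ∈ B, a ≤ b) ∧
      (∀ A' : Set L, (∀ a ∈ A', CompletelyJoinIrreducible a) → sSup A' = w →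
        (∀ a ∈ A', sSup (A' \ {a}) < w) → A' = A)) :
    ∀ c w : L, c ⋖ w →
      ∃! j : L, CompletelyJoinIrreducible j ∧ j ≤ w ∧ ¬ j ≤ c := by
  intro c w hcov
  have hcw : c < w := hcov.1
  obtain ⟨A, hA1, hA2, hA3, hA4, hA5⟩ := hUD w
  -- existence of a candidate
  have hex : ∃ j : L, CompletelyJoinIrreducible j ∧ j ≤ w ∧ ¬ j ≤ c := by
    by_contra h
    push_neg at h
    have hwc : w ≤ c := by
      conv_lhs => rw [hSpatial w]
      exact sSup_le (fun p hp => h p hp.1 hp.2)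
    exact absurd hwc hcw.not_ge
  obtain ⟨j0, hj0⟩ := hex
  -- for any candidate j, c ⊔ j = w
  have hsup : ∀ j : L, j ≤ w → ¬ j ≤ c → c ⊔ j = w := by
    intro j hjw hjc
    have h1 : c < c ⊔ j :=
      lt_of_le_of_ne le_sup_left (fun h => hjc (h ▸ le_sup_right))
    have h2 : c ⊔ j ≤ w := sup_le hcw.le hjw
    exact h2.lt_or_eq.resolve_left (hcov.2 h1)
  -- refinement: every a ∈ A is below c or below any candidate j
  have hsplit : ∀ j : L, j ≤ w → ¬ j ≤ c → ∀ a ∈ A, a ≤ c ∨ a ≤ j := by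
    intro j hjw hjc a ha
    have hD : sSup ({p : L | CompletelyJoinIrreducible p ∧ p ≤ c} ∪ {j}) = w := by
      rw [sSup_union, ← hSpatial c, sSup_singleton, hsup j hjw hjc]
    obtain ⟨b, hb, hab⟩ := hA4 _ hD a ha
    rcases hb with ⟨_, hb2⟩ | hb
    · exact Or.inl (hab.trans hb2)
    · exact Or.inr (by rwa [Set.mem_singleton_iff.mp hb] at hab)
  -- key: any candidate lies in A
  have key : ∀ j : L, CompletelyJoinIrreducible j → j ≤ w → ¬ j ≤ c → j ∈ A := by
    intro j hj hjw hjc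
    set A'' : Set L := {a | a ∈ A ∧ a ≤ c ∧ ¬ a ≤ j} ∪ {j} with hA''
    have hmemA'' : ∀ a ∈ A'', a = j ∨ (a ∈ A ∧ a ≤ c ∧ ¬ a ≤ j) := by
      intro a ha
      rcases ha with ha | ha
      · exact Or.inr ha
      · exact Or.inl (Set.mem_singleton_iff.mp ha)
    have hc1 : ∀ a ∈ A'', CompletelyJoinIrreducible a := by
      intro a ha
      rcases hmemA'' a ha with rfl | ⟨haA, _, _⟩
      · exact hj
      · exact hA1 a haA
    have hc2 : sSup A'' = w := by
      apply le_antisymm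
      · apply sSup_le
        intro a ha
        rcases hmemA'' a ha with rfl | ⟨_, hac, _⟩
        · exact hjw
        · exact hac.trans hcw.le
      · rw [← hA2]
        apply sSup_le
        intro a ha
        rcases hsplit j hjw hjc a ha with hac | haj
        · by_cases haj : a ≤ j
          · exact haj.trans (le_sSup (Or.inr rfl))
          · exact le_sSup (Or.inl ⟨ha, hac, haj⟩)
        · exact haj.trans (le_sSup (Or.inr rfl))
    have hc3 : ∀ a ∈ A'', sSup (A'' \ {a}) < w := by
      intro a ha
      rcases hmemA'' a ha with rfl | ⟨haA, hac, haj⟩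
      · -- removing j: everything left is ≤ c
        have : sSup (A'' \ {a}) ≤ c := by
          apply sSup_le
          rintro b ⟨hb, hbn⟩
          rcases hmemA'' b hb with rfl | ⟨_, hbc, _⟩
          · exact absurd rfl hbn
          · exact hbc
        exact lt_of_le_of_lt this hcw
      · -- removing some a ≤ c, a ≰ j
        by_cases heq : sSup (A'' \ {a}) = w
        case neg =>
          have hle : sSup (A'' \ {a}) ≤ w := by
            apply sSup_le
            rintro b ⟨hb, -⟩
            rcases hmemA'' b hb with rfl | ⟨_, hbc, _⟩
            · exact hjw
            · exact hbc.trans hcw.le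
          exact hle.lt_of_ne heq
        case pos =>
          exfalso
          obtain ⟨b, hb, hab⟩ := hA4 _ heq a haA
          rcases hmemA'' b hb.1 with rfl | ⟨hbA, _, _⟩
          · exact haj hab
          · have hba : b ≠ a := fun h => hb.2 (h ▸ rfl)
            have : w ≤ sSup (A \ {a}) := by
              rw [← hA2]
              apply sSup_le
              intro x hx
              have hbmem : b ∈ A \ {a} := ⟨hbA, hba⟩
              by_cases hxa : x = a
              · subst hxa
                exact hab.trans (le_sSup hbmem)
              · exact le_sSup ⟨hx, hxa⟩
            exact absurd this (hA3 a haA).not_ge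
    have hAA : A'' = A := hA5 A'' hc1 hc2 hc3
    rw [← hAA]
    exact Or.inr rfl
  -- conclusion
  refine ⟨j0, hj0, ?_⟩
  intro y hy
  obtain ⟨hy1, hy2, hy3⟩ := hy
  obtain ⟨hj01, hj02, hj03⟩ := hj0
  have hyA : y ∈ A := key y hy1 hy2 hy3
  have hj0A : j0 ∈ A := key j0 hj01 hj02 hj03
  have h1 : y ≤ j0 := (hsplit j0 hj02 hj03 y hyA).resolve_left hy3
  have h2 : j0 ≤ y := (hsplit y hy2 hy3 j0 hj0A).resolve_left hj03
  exact le_antisymm h1 h2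
end

section
/- Let L be an atomistic, strongly coatomic, join semidistributive complete lattice. Then for every covering pair c ⋖ w in L there exists a unique atom t with t ≤ w and t ≰ c. -/
theorem unique_atom_of_atomistic_stronglyCoatomic_jsd
    {L : Type*} [CompleteLattice L]
    (hAtomistic : ∀ a : L, a ≠ ⊥ → a = sSup {t : L | IsAtom t ∧ t ≤ a})
    (hSC : ∀ a c : L, a < c → ∃ b : L, a ≤ b ∧ b ⋖ c)
    (hSD : ∀ x y z : L, x ⊔ y = x ⊔ z → x ⊔ y = x ⊔ (y ⊓ z)) :
    ∀ c w : L, c ⋖ w → ∃! t : L, IsAtom t ∧ t ≤ w ∧ ¬ t ≤ c := by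
  intro c w hcw
  have hwne : w ≠ ⊥ := fun h => (not_lt_bot (h ▸ hcw.lt))
  have hex : ∃ t : L, IsAtom t ∧ t ≤ w ∧ ¬ t ≤ c := by
    by_contra h
    push_neg at h
    have : w ≤ c := by
      conv_lhs => rw [hAtomistic w hwne]
      exact sSup_le fun t ⟨ht, htw⟩ => h t ht htw
    exact absurd this (not_le_of_gt hcw.lt)
  obtain ⟨t, ht, htw, htc⟩ := hex
  refine ⟨t, ⟨ht, htw, htc⟩, ?_⟩
  rintro s ⟨hs, hsw, hsc⟩
  have key : ∀ u : L, u ≤ w → ¬ u ≤ c → c ⊔ u = w := by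
    intro u huw huc
    have h1 : c < c ⊔ u := lt_of_le_of_ne le_sup_left
      (fun h => huc (h ▸ le_sup_right))
    have h2 : c ⊔ u ≤ w := sup_le hcw.le huw
    exact h2.lt_or_eq.resolve_left (hcw.2 h1)
  have hst : c ⊔ s = c ⊔ t := (key s hsw hsc).trans (key t htw htc).symm
  have := hSD c s t hst
  have hne : s ⊓ t ≠ ⊥ := by
    intro h
    rw [h, sup_bot_eq] at this
    have : w = c := ((key s hsw hsc).symm.trans this)
    exact hsc (hsw.trans this.le)
  have h1 : s ⊓ t = s := (hs.le_iff.mp inf_le_left).resolve_left hne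
  have h2 : s ⊓ t = t := (ht.le_iff.mp inf_le_right).resolve_left hne
  exact h1.symm.trans h2
end

section
/- Let P be a partially ordered set in which every chain is finite (equivalently, P satisfies both the ascending and descending chain conditions). Then the lattice Co(P) of order-convex subsets of P, ordered by inclusion, is strongly coatomic: if A ⊊ B are order-convex subsets of P, then there exists b ∈ B \ A such that B \ {b} is order-convex and A ⊆ B \ {b} (so that B \ {b} is covered by B in Co(P)). -/
/-!
Every chain being finite, `P` has no infinite ascending or descending chains. Pick `b ∈ B \ A`,
an element `m ∈ B` maximal in `B` above `b` and an element `n ∈ B` minimal in `B` below `b`.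
Removing an extremal element from a convex set leaves it convex, and `m`, `n` cannot both lie in
`A`, for then so would `b` by convexity of `A`. Removing a single point is always a covering.
-/

section ChainsFinite

variable {P : Type*} [PartialOrder P]

lemma wellFoundedLT_of_chains_finite (h : ∀ C : Set P, IsChain (· ≤ ·) C → C.Finite) :
    WellFoundedLT P := by
  refine ⟨RelEmbedding.wellFounded_iff_isEmpty.2 ⟨fun f => ?_⟩⟩
  have hf : StrictAnti f := fun _ _ hmn => f.map_rel_iff.2 hmn
  exact Set.infinite_range_of_injective hf.injective (h _ hf.antitone.isChain_range)

lemma wellFoundedGT_of_chains_finite (h : ∀ C : Set P, IsChain (· ≤ ·) C → C.Finite) :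
    WellFoundedGT P := by
  refine ⟨RelEmbedding.wellFounded_iff_isEmpty.2 ⟨fun f => ?_⟩⟩
  have hf : StrictMono f := fun _ _ hmn => f.map_rel_iff.2 hmn
  exact Set.infinite_range_of_injective hf.injective (h _ hf.monotone.isChain_range)

end ChainsFinite

namespace Set.OrdConnected

variable {P : Type*} [PartialOrder P] {B : Set P} {c : P}

lemma diff_singleton_of_maximal (hB : B.OrdConnected) (hc : Maximal (· ∈ B) c) :
    (B \ {c}).OrdConnected := by
  refine ⟨fun x hx y hy z hz => ⟨hB.out hx.1 hy.1 hz, fun hzc => hy.2 ?_⟩⟩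
  rw [mem_singleton_iff] at hzc
  subst hzc
  exact (hc.eq_of_le hy.1 hz.2).symm

lemma diff_singleton_of_minimal (hB : B.OrdConnected) (hc : Minimal (· ∈ B) c) :
    (B \ {c}).OrdConnected := by
  refine ⟨fun x hx y hy z hz => ⟨hB.out hx.1 hy.1 hz, fun hzc => hx.2 ?_⟩⟩
  rw [mem_singleton_iff] at hzc
  subst hzc
  exact (hc.eq_of_ge hx.1 hz.1).symm

lemma exists_mem_diff_ordConnected_diff_singleton [WellFoundedLT P] [WellFoundedGT P]
    {A : Set P} (hA : A.OrdConnected) (hB : B.OrdConnected) (hAB : A ⊂ B) :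
    ∃ c ∈ B \ A, (B \ {c}).OrdConnected := by
  obtain ⟨b, hbB, hbA⟩ := exists_of_ssubset hAB
  obtain ⟨m, hbm, hm⟩ := exists_maximal_ge_of_wellFoundedGT (· ∈ B) b hbB
  obtain ⟨n, hnb, hn⟩ := exists_minimal_le_of_wellFoundedLT (· ∈ B) b hbB
  by_cases hmA : m ∈ A
  · have hnA : n ∉ A := fun hnA => hbA (hA.out hnA hmA ⟨hnb, hbm⟩)
    exact ⟨n, ⟨hn.prop, hnA⟩, hB.diff_singleton_of_minimal hn⟩
  · exact ⟨m, ⟨hm.prop, hmA⟩, hB.diff_singleton_of_maximal hm⟩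

end Set.OrdConnected

theorem coPoset_stronglyCoatomic {P : Type*} [PartialOrder P]
    (hchain : ∀ C : Set P, IsChain (· ≤ ·) C → C.Finite)
    (A B : Set P) (hA : A.OrdConnected) (hB : B.OrdConnected) (hAB : A ⊂ B) :
    ∃ b ∈ B \ A, (B \ {b}).OrdConnected ∧ A ⊆ B \ {b} ∧
      ∀ C : Set P, C.OrdConnected → B \ {b} ⊆ C → C ⊆ B →
        C = B \ {b} ∨ C = B := by
  have := wellFoundedLT_of_chains_finite hchain
  have := wellFoundedGT_of_chains_finite hchain
  obtain ⟨b, hb, hconv⟩ := hA.exists_mem_diff_ordConnected_diff_singleton hB hAB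
  exact ⟨b, hb, hconv, Set.subset_sdiff_singleton hAB.subset hb.2,
    fun C _ hBC hCB => (Set.sdiff_singleton_covBy hb.1).eq_or_eq hBC hCB⟩
end

section
/- Let S be a meet semilattice satisfying the ascending chain condition. Then the lattice Sub∧(S) of subsets of S closed under binary meet, ordered by inclusion, is strongly coatomic: if A ⊊ B are meet-closed subsets of S, then there exists b ∈ B \ A (any element maximal in B \ A) such that B \ {b} is meet-closed and A ⊆ B \ {b} (so that B \ {b} is covered by B in Sub∧(S)). -/
theorem subSemilattice_stronglyCoatomic {S : Type*} [SemilatticeInf S]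
    (hACC : ∀ T : Set S, T.Nonempty → ∃ m, Maximal (· ∈ T) m)
    (A B : Set S)
    (hA : ∀ x ∈ A, ∀ y ∈ A, x ⊓ y ∈ A)
    (hB : ∀ x ∈ B, ∀ y ∈ B, x ⊓ y ∈ B)
    (hAB : A ⊂ B) :
    ∃ b, Maximal (· ∈ B \ A) b ∧
      (∀ x ∈ B \ {b}, ∀ y ∈ B \ {b}, x ⊓ y ∈ B \ {b}) ∧
      A ⊆ B \ {b} ∧
      ∀ C : Set S, (∀ x ∈ C, ∀ y ∈ C, x ⊓ y ∈ C) → B \ {b} ⊆ C → C ⊆ B →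
        C = B \ {b} ∨ C = B := by
  have hne : (B \ A).Nonempty := by
    obtain ⟨x, hxB, hxA⟩ := Set.exists_of_ssubset hAB
    exact ⟨x, hxB, hxA⟩
  obtain ⟨b, hb⟩ := hACC (B \ A) hne
  refine ⟨b, hb, ?_, ?_, ?_⟩
  · rintro x ⟨hxB, hxb⟩ y ⟨hyB, hyb⟩
    refine ⟨hB x hxB y hyB, ?_⟩
    intro h
    simp only [Set.mem_singleton_iff] at h hxb hyb
    have hbx : b < x := lt_of_le_of_ne (h ▸ inf_le_left) (Ne.symm hxb)
    have hby : b < y := lt_of_le_of_ne (h ▸ inf_le_right) (Ne.symm hyb)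
    have hxA : x ∈ A := by
      by_contra hxA
      exact absurd (hb.2 ⟨hxB, hxA⟩ hbx.le) (not_le_of_gt hbx)
    have hyA : y ∈ A := by
      by_contra hyA
      exact absurd (hb.2 ⟨hyB, hyA⟩ hby.le) (not_le_of_gt hby)
    exact hb.1.2 (h ▸ hA x hxA y hyA)
  · intro a ha
    exact ⟨hAB.1 ha, fun h => hb.1.2 (Set.mem_singleton_iff.mp h ▸ ha)⟩
  · intro C _ hC1 hC2
    by_cases hbC : b ∈ C
    · right
      apply Set.Subset.antisymm hC2
      intro x hx
      by_cases hxb : x = b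
      · exact hxb ▸ hbC
      · exact hC1 ⟨hx, hxb⟩
    · left
      apply Set.Subset.antisymm _ hC1
      intro x hx
      exact ⟨hC2 hx, fun h => hbC (Set.mem_singleton_iff.mp h ▸ hx)⟩
end
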